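/- arXiv:2502.18350 — 5 statements merged into one kernel-verified Lean document; each statement's English description precedes it below -/
import Mathlib

section
/- For an edge (u,v) in a connected unweighted graph G, the effective resistance res(u,v) equals 1 if and only if (u,v) is a cut edge (i.e., removing it disconnects G). -/
/-!
Put `x = 1_u - 1_v` and `f = L⁺ x`. Since `G` is connected and `x ⊥ 1`, `L f = x`, so
`res(u, v) = x ⬝ f = f u - f v`. Deleting the edge `uv` splits off a rank-one term,
`L_G f = L_{G - uv} f + (f u - f v) x`, hence `L_{G - uv} f = (1 - res(u, v)) x`.
If `res(u, v) = 1`, then `f` is harmonic on `G - uv`, so it is constant on its components while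
`f u - f v = 1`: `uv` is a bridge. Conversely, if `uv` is a bridge, summing `L_{G - uv} f` over the
component of `u` in `G - uv` gives `0 = 1 - res(u, v)`.
-/

open Matrix

/-- `B` is the Moore–Penrose pseudoinverse of `A`. -/
def IsMoorePenrose {V : Type*} [Fintype V] [DecidableEq V] (A B : Matrix V V ℝ) : Prop :=
  A * B * A = A ∧ B * A * B = B ∧ (A * B)ᵀ = A * B ∧ (B * A)ᵀ = B * A

/-- Effective resistance between `u` and `v`, given a matrix `M` playing the role of the
pseudoinverse of the Laplacian: `(1_u - 1_v)ᵀ M (1_u - 1_v)`. -/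
noncomputable def effRes {V : Type*} [Fintype V] [DecidableEq V]
    (M : Matrix V V ℝ) (u v : V) : ℝ :=
  (Pi.single u 1 - Pi.single v 1) ⬝ᵥ (M *ᵥ (Pi.single u 1 - Pi.single v 1))

theorem IsMoorePenrose.mul_mul_self_of_transpose_eq {V : Type*} [Fintype V] [DecidableEq V]
    {A B : Matrix V V ℝ} (hB : IsMoorePenrose A B) (hA : Aᵀ = A) : A * (A * B) = A :=
  calc A * (A * B) = Aᵀ * (A * B)ᵀ := by rw [hA, hB.2.2.1]
    _ = A := by rw [← transpose_mul, hB.1, hA]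

namespace SimpleGraph

variable {V : Type*} [Fintype V] [DecidableEq V] (G : SimpleGraph V) [DecidableRel G.Adj]

theorem dotProduct_lapMatrix_mulVec_eq_zero {R : Type*} [CommRing R] {g : V → R}
    (hg : G.lapMatrix R *ᵥ g = 0) (y : V → R) : g ⬝ᵥ (G.lapMatrix R *ᵥ y) = 0 := by
  rw [dotProduct_mulVec, ← mulVec_transpose, G.isSymm_lapMatrix R, hg, zero_dotProduct]

theorem sum_lapMatrix_mulVec {R : Type*} [CommRing R] (y : V → R) :
    ∑ i, (G.lapMatrix R *ᵥ y) i = 0 := by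
  rw [← one_dotProduct]
  exact G.dotProduct_lapMatrix_mulVec_eq_zero (G.lapMatrix_mulVec_const_eq_zero (R := R)) y

theorem eq_zero_of_lapMatrix_mulVec_eq_zero (hG : G.Connected) {y : V → ℝ}
    (hy : G.lapMatrix ℝ *ᵥ y = 0) (hsum : ∑ i, y i = 0) : y = 0 := by
  have hconst := (lapMatrix_mulVec_eq_zero_iff_forall_reachable G).mp hy
  ext i
  have : Nonempty V := hG.nonempty
  have hcard : (Fintype.card V : ℝ) * y i = 0 := by
    rw [← hsum, ← nsmul_eq_mul, ← Finset.card_univ, ← Finset.sum_const]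
    exact Finset.sum_congr rfl fun j _ ↦ hconst i j (hG.preconnected i j)
  simpa [Fintype.card_ne_zero] using hcard

theorem lapMatrix_mulVec_mulVec_eq_self (hG : G.Connected) {Lp : Matrix V V ℝ}
    (hLp : IsMoorePenrose (G.lapMatrix ℝ) Lp) {x : V → ℝ} (hx : ∑ i, x i = 0) :
    G.lapMatrix ℝ *ᵥ (Lp *ᵥ x) = x := by
  have hker : G.lapMatrix ℝ *ᵥ (x - G.lapMatrix ℝ *ᵥ (Lp *ᵥ x)) = 0 := by
    rw [mulVec_sub, mulVec_mulVec, mulVec_mulVec, Matrix.mul_assoc,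
      hLp.mul_mul_self_of_transpose_eq (G.isSymm_lapMatrix ℝ), sub_self]
  have hsum : ∑ i, (x - G.lapMatrix ℝ *ᵥ (Lp *ᵥ x)) i = 0 := by
    simp only [Pi.sub_apply, Finset.sum_sub_distrib, hx, G.sum_lapMatrix_mulVec, sub_self]
  exact (sub_eq_zero.mp (G.eq_zero_of_lapMatrix_mulVec_eq_zero hG hker hsum)).symm

theorem lapMatrix_mulVec_apply_eq_sum {R : Type*} [NonAssocRing R] (g : V → R) (w : V) :
    (G.lapMatrix R *ᵥ g) w = ∑ z, if G.Adj w z then g w - g z else 0 := by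
  rw [lapMatrix_mulVec_apply, ← Finset.sum_filter, ← neighborFinset_eq_filter,
    Finset.sum_sub_distrib, Finset.sum_const, card_neighborFinset_eq_degree, nsmul_eq_mul]

theorem lapMatrix_mulVec_eq_deleteEdges_add {R : Type*} [NonAssocRing R] {u v : V}
    (huv : G.Adj u v) (g : V → R) :
    G.lapMatrix R *ᵥ g = (G.deleteEdges {s(u, v)}).lapMatrix R *ᵥ g
      + (g u - g v) • (Pi.single u 1 - Pi.single v 1) := by
  ext w
  have hsplit : ∀ z, (if G.Adj w z then g w - g z else 0) =
      (if G.Adj w z ∧ s(w, z) ≠ s(u, v) then g w - g z else 0)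
        + (if s(w, z) = s(u, v) then g w - g z else 0) := by
    intro z
    by_cases h : s(w, z) = s(u, v)
    · have : G.Adj w z := by rwa [← mem_edgeSet, h]
      simp [h, this]
    · simp [h]
  simp only [lapMatrix_mulVec_apply_eq_sum, deleteEdges_adj, Set.mem_singleton_iff, hsplit,
    Finset.sum_add_distrib, Pi.add_apply, Pi.smul_apply, Pi.sub_apply, add_right_inj]
  rcases eq_or_ne w u with rfl | hwu
  · simp [huv.ne]
  rcases eq_or_ne w v with rfl | hwv
  · simp [hwu]
  · simp [hwu, hwv]

theorem eq_zero_of_lapMatrix_mulVec_eq_smul {u v : V} (huv : ¬ G.Reachable u v) {y : V → ℝ}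
    {c : ℝ} (hy : G.lapMatrix ℝ *ᵥ y = c • (Pi.single u 1 - Pi.single v 1)) : c = 0 := by
  classical
  set g : V → ℝ := fun i ↦ if G.Reachable u i then 1 else 0
  have hg : G.lapMatrix ℝ *ᵥ g = 0 := by
    rw [lapMatrix_mulVec_eq_zero_iff_forall_reachable]
    intro i j hij
    have hiff : G.Reachable u i ↔ G.Reachable u j := ⟨(·.trans hij), (·.trans hij.symm)⟩
    simp only [g, hiff]
  have := G.dotProduct_lapMatrix_mulVec_eq_zero hg y
  simpa [hy, g, dotProduct_sub, huv] using this

end SimpleGraph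

/-- For an edge `(u,v)` of a connected unweighted graph `G`, the effective resistance
equals `1` iff `(u,v)` is a cut edge, i.e. removing it disconnects `G`. -/
theorem effRes_eq_one_iff_cutEdge {V : Type*} [Fintype V] [DecidableEq V]
    (G : SimpleGraph V) [DecidableRel G.Adj] (hconn : G.Connected)
    (Lp : Matrix V V ℝ) (hLp : IsMoorePenrose (G.lapMatrix ℝ) Lp)
    {u v : V} (huv : G.Adj u v) :
    effRes Lp u v = 1 ↔ ¬ (G.deleteEdges {s(u, v)}).Connected := by
  set x : V → ℝ := Pi.single u 1 - Pi.single v 1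
  set f := Lp *ᵥ x
  have hLf : G.lapMatrix ℝ *ᵥ f = x := G.lapMatrix_mulVec_mulVec_eq_self hconn hLp (by simp [x])
  have hres : effRes Lp u v = f u - f v := by simp [effRes, f, x, sub_dotProduct]
  have hHf : (G.deleteEdges {s(u, v)}).lapMatrix ℝ *ᵥ f = (1 - effRes Lp u v) • x := by
    have hsplit := G.lapMatrix_mulVec_eq_deleteEdges_add huv f
    rw [hLf, ← hres] at hsplit
    rw [sub_smul, one_smul, eq_sub_iff_add_eq, ← hsplit]
  constructor
  · intro hres1 hHconn
    rw [hres1, sub_self, zero_smul,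
      SimpleGraph.lapMatrix_mulVec_eq_zero_iff_forall_reachable] at hHf
    linarith [hHf u v (hHconn.preconnected u v)]
  · intro hH
    have hbridge : ¬ (G.deleteEdges {s(u, v)}).Reachable u v :=
      SimpleGraph.isBridge_iff.mp (not_not.mp (mt hconn.connected_delete_edge_of_not_isBridge hH))
    linarith [SimpleGraph.eq_zero_of_lapMatrix_mulVec_eq_smul _ hbridge hHf]
end

section
/- Rayleigh's Monotonicity Law: if G and H are weighted graphs on the same vertex set V with E_G ⊆ E_H and w_G(e) ≤ w_H(e) for all e ∈ E_G, then for all u,v ∈ V, the effective resistance in G is at least the effective resistance in H: res_G(u,v) ≥ res_H(u,v). -/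
open Matrix

/-- A symmetric, nonnegative edge-weight function with zero diagonal,
encoding a weighted graph (weight `0` means no edge). -/
structure IsWeight {V : Type*} (w : V → V → ℝ) : Prop where
  symm : ∀ u v, w u v = w v u
  nonneg : ∀ u v, 0 ≤ w u v
  loopless : ∀ v, w v v = 0

/-- The support graph of a weight function: `u ~ v` iff `u ≠ v` and `w u v ≠ 0`. -/
def supportGraph {V : Type*} (w : V → V → ℝ) : SimpleGraph V :=
  SimpleGraph.fromRel fun u v => w u v ≠ 0

/-- The weighted graph Laplacian `L = D - A`. -/
noncomputable def wLap {V : Type*} [Fintype V] [DecidableEq V] (w : V → V → ℝ) :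
    Matrix V V ℝ :=
  Matrix.diagonal (fun v => ∑ u, w v u) - Matrix.of w
section RayleighAux
open Matrix
variable {V : Type*} [Fintype V] [DecidableEq V]

lemma wLap_mulVec' (w : V → V → ℝ) (f : V → ℝ) (v : V) :
    (wLap w *ᵥ f) v = ∑ u, w v u * (f v - f u) := by
  simp only [wLap, Matrix.sub_mulVec, Pi.sub_apply, Matrix.mulVec_diagonal]
  rw [Finset.sum_mul]
  rw [show (Matrix.of w *ᵥ f) v = ∑ u, w v u * f u from rfl]
  rw [← Finset.sum_sub_distrib]
  congr 1; ext u; ring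

lemma quadForm' (w : V → V → ℝ) (hs : ∀ u v, w u v = w v u) (f : V → ℝ) :
    f ⬝ᵥ (wLap w *ᵥ f) = (1/2) * ∑ u, ∑ v, w u v * (f u - f v)^2 := by
  have h1 : f ⬝ᵥ (wLap w *ᵥ f) = ∑ v, ∑ u, w v u * f v * (f v - f u) := by
    unfold dotProduct
    congr 1; ext v
    rw [wLap_mulVec', Finset.mul_sum]
    congr 1; ext u; ring
  have h2 : ∑ v, ∑ u, w v u * f v * (f v - f u)
      = ∑ v, ∑ u, w v u * f u * (f u - f v) := by
    rw [Finset.sum_comm]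
    congr 1; ext v; congr 1; ext u; rw [hs]
  have h3 : (2:ℝ) * ∑ v, ∑ u, w v u * f v * (f v - f u)
      = ∑ v, ∑ u, w v u * (f v - f u)^2 := by
    rw [two_mul]
    nth_rewrite 2 [h2]
    rw [← Finset.sum_add_distrib]
    congr 1; ext v
    rw [← Finset.sum_add_distrib]
    congr 1; ext u; ring
  rw [h1]
  linarith [h3]

lemma quad_mono' (wG wH : V → V → ℝ) (hle : ∀ u v, wG u v ≤ wH u v)
    (hsG : ∀ u v, wG u v = wG v u) (hsH : ∀ u v, wH u v = wH v u) (f : V → ℝ) :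
    f ⬝ᵥ (wLap wG *ᵥ f) ≤ f ⬝ᵥ (wLap wH *ᵥ f) := by
  rw [quadForm' wG hsG, quadForm' wH hsH]
  gcongr with u _ v _
  exact hle u v

lemma quad_nonneg' (w : V → V → ℝ) (hs : ∀ u v, w u v = w v u)
    (hn : ∀ u v, 0 ≤ w u v) (f : V → ℝ) : 0 ≤ f ⬝ᵥ (wLap w *ᵥ f) := by
  rw [quadForm' w hs]
  have : (0:ℝ) ≤ ∑ u, ∑ v, w u v * (f u - f v)^2 :=
    Finset.sum_nonneg fun u _ => Finset.sum_nonneg fun v _ =>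
      mul_nonneg (hn u v) (sq_nonneg _)
  linarith

lemma wLap_symm' (w : V → V → ℝ) (hs : ∀ u v, w u v = w v u) :
    (wLap w)ᵀ = wLap w := by
  ext i j
  by_cases h : i = j
  · subst h; rfl
  · simp [wLap, Matrix.sub_apply, Matrix.diagonal_apply_ne, h, Ne.symm h, hs i j]

lemma mp_unique' {A B C : Matrix V V ℝ} (hB : IsMoorePenrose A B)
    (hC : IsMoorePenrose A C) : B = C := by
  obtain ⟨hB1, hB2, hB3, hB4⟩ := hB
  obtain ⟨hC1, hC2, hC3, hC4⟩ := hC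
  have h1 : B = B * A * C := by
    calc B = B * A * B := hB2.symm
    _ = B * (A * B) := by rw [mul_assoc]
    _ = B * (A * B)ᵀ := by rw [hB3]
    _ = B * (A * C * A * B)ᵀ := by rw [hC1]
    _ = B * ((A * C) * (A * B))ᵀ := by noncomm_ring
    _ = B * ((A * B)ᵀ * (A * C)ᵀ) := by rw [transpose_mul]
    _ = B * ((A * B) * (A * C)) := by rw [hB3, hC3]
    _ = (B * A * B) * (A * C) := by noncomm_ring
    _ = B * A * C := by rw [hB2, mul_assoc]
  have h2 : C = B * A * C := by
    calc C = C * A * C := hC2.symm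
    _ = (C * A)ᵀ * C := by rw [hC4]
    _ = (C * (A * B * A))ᵀ * C := by rw [hB1]
    _ = ((C * A) * (B * A))ᵀ * C := by noncomm_ring
    _ = ((B * A)ᵀ * (C * A)ᵀ) * C := by rw [transpose_mul]
    _ = ((B * A) * (C * A)) * C := by rw [hB4, hC4]
    _ = B * A * (C * A * C) := by noncomm_ring
    _ = B * A * C := by rw [hC2]
  rw [h1, ← h2]

lemma mp_symm' {A B : Matrix V V ℝ} (hA : Aᵀ = A) (hB : IsMoorePenrose A B) :
    Bᵀ = B := by
  obtain ⟨h1, h2, h3, h4⟩ := hB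
  have hBt : IsMoorePenrose A Bᵀ := by
    refine ⟨?_, ?_, ?_, ?_⟩
    · calc A * Bᵀ * A = (Aᵀ * B * Aᵀ)ᵀ := by simp [transpose_mul, hA, mul_assoc]
      _ = A := by rw [hA, h1, hA]
    · calc Bᵀ * A * Bᵀ = (Bᵀᵀ * Aᵀ * Bᵀᵀ)ᵀ := by simp [transpose_mul, mul_assoc]
      _ = Bᵀ := by rw [transpose_transpose, hA, h2]
    · calc (A * Bᵀ)ᵀ = B * Aᵀ := by rw [transpose_mul, transpose_transpose]
      _ = B * A := by rw [hA]
      _ = Aᵀ * Bᵀ := by rw [← transpose_mul, h4]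
      _ = A * Bᵀ := by rw [hA]
    · calc (Bᵀ * A)ᵀ = Aᵀ * B := by rw [transpose_mul, transpose_transpose]
      _ = A * B := by rw [hA]
      _ = Bᵀ * Aᵀ := by rw [← transpose_mul, h3]
      _ = Bᵀ * A := by rw [hA]
  exact mp_unique' hBt ⟨h1, h2, h3, h4⟩

lemma ker_const' (w : V → V → ℝ) (hw : IsWeight w)
    (hconn : (supportGraph w).Connected) {f : V → ℝ}
    (hf : wLap w *ᵥ f = 0) : ∀ a b, f a = f b := by
  have hq : f ⬝ᵥ (wLap w *ᵥ f) = 0 := by rw [hf]; simp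
  rw [quadForm' w hw.symm] at hq
  have hsum : ∑ u, ∑ v, w u v * (f u - f v)^2 = 0 := by linarith
  have hterm : ∀ a b : V, w a b * (f a - f b)^2 = 0 := by
    have h1 := (Finset.sum_eq_zero_iff_of_nonneg
      (fun u _ => Finset.sum_nonneg fun v _ =>
        mul_nonneg (hw.nonneg u v) (sq_nonneg _))).mp hsum
    intro a b
    exact (Finset.sum_eq_zero_iff_of_nonneg
      (fun v _ => mul_nonneg (hw.nonneg a v) (sq_nonneg _))).mp
      (h1 a (Finset.mem_univ a)) b (Finset.mem_univ b)
  have hadj : ∀ a b, (supportGraph w).Adj a b → f a = f b := by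
    intro a b hab
    rw [supportGraph, SimpleGraph.fromRel_adj] at hab
    have hwab : w a b ≠ 0 := by
      rcases hab.2 with h | h
      · exact h
      · rw [hw.symm]; exact h
    have h0 : (f a - f b)^2 = 0 := by
      rcases mul_eq_zero.mp (hterm a b) with h | h
      · exact absurd h hwab
      · exact h
    have := pow_eq_zero_iff (n := 2) (by norm_num) |>.mp h0
    linarith [this]
  intro a b
  obtain ⟨p⟩ := hconn.preconnected a b
  induction p with
  | nil => rfl
  | cons h' p ih => exact (hadj _ _ h').trans ih

lemma range_single' (w : V → V → ℝ) (hw : IsWeight w)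
    (hconn : (supportGraph w).Connected) {B : Matrix V V ℝ}
    (hB : IsMoorePenrose (wLap w) B) {x : V → ℝ} (hx : ∑ i, x i = 0) :
    wLap w *ᵥ (B *ᵥ x) = x := by
  set A := wLap w with hA
  have hAs : Aᵀ = A := wLap_symm' w hw.symm
  obtain ⟨h1, h2, h3, h4⟩ := hB
  have hAAB : A * (A * B) = A := by
    calc A * (A * B) = ((A * B)ᵀ * Aᵀ)ᵀ := by
          rw [transpose_mul, transpose_transpose, transpose_transpose]
    _ = ((A * B) * A)ᵀ := by rw [h3, hAs]
    _ = A := by rw [h1, hAs]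
  set y : V → ℝ := x - A *ᵥ (B *ᵥ x) with hy
  have hAy : A *ᵥ y = 0 := by
    rw [hy, Matrix.mulVec_sub, Matrix.mulVec_mulVec, Matrix.mulVec_mulVec,
      mul_assoc, hAAB, sub_self]
  have hyc : ∀ a b, y a = y b := ker_const' w hw hconn hAy
  have hyx : y ⬝ᵥ x = 0 := by
    rcases isEmpty_or_nonempty V with hV | hV
    · simp [dotProduct]
    · obtain ⟨a⟩ := hV
      calc y ⬝ᵥ x = ∑ i, y a * x i := by
            unfold dotProduct; congr 1; ext i; rw [hyc a i]
      _ = y a * ∑ i, x i := by rw [Finset.mul_sum]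
      _ = 0 := by rw [hx, mul_zero]
  have hyq : y ⬝ᵥ (A *ᵥ (B *ᵥ x)) = 0 := by
    rw [Matrix.dotProduct_mulVec, ← Matrix.mulVec_transpose, hAs, hAy]
    simp
  have hyy : y ⬝ᵥ y = 0 := by
    have : y ⬝ᵥ y = y ⬝ᵥ x - y ⬝ᵥ (A *ᵥ (B *ᵥ x)) := by
      rw [hy]; rw [dotProduct_sub]
    rw [this, hyx, hyq, sub_zero]
  have hy0 : y = 0 := by
    have hterm : ∀ j : V, y j * y j = 0 := by
      intro j
      have h := (Finset.sum_eq_zero_iff_of_nonneg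
        (fun j _ => mul_self_nonneg (y j))).mp hyy
      exact h j (Finset.mem_univ j)
    ext i
    simpa using mul_self_eq_zero.mp (hterm i)
  have : x - A *ᵥ (B *ᵥ x) = 0 := by rw [← hy, hy0]
  have := sub_eq_zero.mp this
  exact this.symm

end RayleighAux
/-- Rayleigh's monotonicity law: increasing edge weights (and/or adding edges) can only
decrease effective resistances. -/
theorem rayleigh_monotonicity {V : Type*} [Fintype V] [DecidableEq V]
    (wG wH : V → V → ℝ) (hwG : IsWeight wG) (hwH : IsWeight wH)
    (hGconn : (supportGraph wG).Connected) (hHconn : (supportGraph wH).Connected)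
    (hle : ∀ u v, wG u v ≤ wH u v)
    (LpG LpH : Matrix V V ℝ)
    (hLpG : IsMoorePenrose (wLap wG) LpG) (hLpH : IsMoorePenrose (wLap wH) LpH) :
    ∀ u v, effRes LpH u v ≤ effRes LpG u v := by
  intro u v
  set x : V → ℝ := Pi.single u 1 - Pi.single v 1 with hxdef
  have hxsum : ∑ i, x i = 0 := by
    simp [hxdef, Pi.sub_apply, Finset.sum_sub_distrib, Pi.single_apply]
  set z : V → ℝ := LpG *ᵥ x with hz
  set y : V → ℝ := LpH *ᵥ x with hy
  have hGz : wLap wG *ᵥ z = x := range_single' wG hwG hGconn hLpG hxsum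
  have hHy : wLap wH *ᵥ y = x := range_single' wH hwH hHconn hLpH hxsum
  have hAGs : (wLap wG)ᵀ = wLap wG := wLap_symm' wG hwG.symm
  -- effective resistances as dot products
  have heH : effRes LpH u v = x ⬝ᵥ y := rfl
  have heG : effRes LpG u v = x ⬝ᵥ z := rfl
  -- quadratic identities
  have hyAHy : y ⬝ᵥ (wLap wH *ᵥ y) = x ⬝ᵥ y := by
    rw [hHy, dotProduct_comm]
  have hzAGz : z ⬝ᵥ (wLap wG *ᵥ z) = x ⬝ᵥ z := by
    rw [hGz, dotProduct_comm]
  have hzAGy : z ⬝ᵥ (wLap wG *ᵥ y) = x ⬝ᵥ y := by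
    rw [Matrix.dotProduct_mulVec, ← Matrix.mulVec_transpose, hAGs, hGz]
  have hyAGz : y ⬝ᵥ (wLap wG *ᵥ z) = x ⬝ᵥ y := by
    rw [hGz, dotProduct_comm]
  -- monotonicity of quadratic forms
  have hmono : y ⬝ᵥ (wLap wG *ᵥ y) ≤ y ⬝ᵥ (wLap wH *ᵥ y) :=
    quad_mono' wG wH hle hwG.symm hwH.symm y
  -- nonnegativity of the G-energy of z - y
  have hq : 0 ≤ (z - y) ⬝ᵥ (wLap wG *ᵥ (z - y)) :=
    quad_nonneg' wG hwG.symm hwG.nonneg (z - y)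
  have hexp : (z - y) ⬝ᵥ (wLap wG *ᵥ (z - y))
      = x ⬝ᵥ z - x ⬝ᵥ y - x ⬝ᵥ y + y ⬝ᵥ (wLap wG *ᵥ y) := by
    rw [Matrix.mulVec_sub, dotProduct_sub, sub_dotProduct, sub_dotProduct,
      hzAGz, hzAGy, hyAGz]
    ring
  rw [heH, heG]
  rw [hexp] at hq
  linarith
end

section
/- Nash-Williams inequality: let G = (V,E) be a connected unweighted graph and s, t ∈ V. Suppose S_1, ..., S_k ⊆ V satisfy s ∈ S_i, t ∉ S_i for all i, and the edge boundary sets E(S_i, V \ S_i) are pairwise disjoint. Then res(s,t) ≥ Σ_{i=1}^k 1/|E(S_i, V \ S_i)|. -/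
open Matrix

open scoped Classical in
/-- The set of edges of `G` with one endpoint in `S` and the other outside `S`. -/
noncomputable def edgeBoundary {V : Type*} [Fintype V] [DecidableEq V]
    (G : SimpleGraph V) [DecidableRel G.Adj] (S : Finset V) : Finset (Sym2 V) :=
  G.edgeFinset.filter fun e => ∃ a b, e = s(a, b) ∧ a ∈ S ∧ b ∉ S

/-!
Let `φ = L⁺ (1_s - 1_t)`. The vector `1_s - 1_t` is orthogonal to the kernel of `L`, the constants,
so `L φ = 1_s - 1_t` and `res(s,t) = φᵀ L φ = Σ_{ab ∈ E} (φ a - φ b)²` is the energy of the unit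
`s`-`t` flow. The flow out of each `S_i` is `Σ_{a ∈ S_i} (L φ) a = 1`, so by Cauchy–Schwarz the
energy on `E(S_i, V \ S_i)` is at least `1 / |E(S_i, V \ S_i)|`; since these edge sets are
disjoint, the contributions add up to at most the total energy.
-/

open Finset

namespace Matrix

variable {n R : Type*} [Fintype n] [DecidableEq n] [CommRing R]

theorem mulVec_mulVec_eq_self_of_isSymm {A B : Matrix n n R} (hA : A.IsSymm)
    (hABA : A * B * A = A) {x : n → R} (hx : ∀ z, A *ᵥ z = 0 → z ⬝ᵥ x = 0) :
    A *ᵥ (B *ᵥ x) = x := by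
  -- `Q * A = 0` and `A` is symmetric, so the rows of `Q` lie in `ker A` and are orthogonal to `x`.
  set Q := 1 - A * B
  have hQA : Q * A = 0 := by simp [Q, sub_mul, hABA]
  have hrow : ∀ v, A *ᵥ Q v = 0 := fun v => by
    rw [← vecMul_transpose, hA.eq, ← mul_apply_eq_vecMul, hQA]
    rfl
  have hQx : Q *ᵥ x = 0 := funext fun v => hx _ (hrow v)
  rw [mulVec_mulVec]
  simpa [Q, sub_mulVec, sub_eq_zero, eq_comm] using hQx

end Matrix

theorem inv_card_le_sum_sq_of_sum_eq_one {ι : Type*} (s : Finset ι) (f : ι → ℝ)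
    (h : ∑ i ∈ s, f i = 1) : (#s : ℝ)⁻¹ ≤ ∑ i ∈ s, f i ^ 2 := by
  have hcs : 1 ≤ (#s : ℝ) * ∑ i ∈ s, f i ^ 2 := by
    simpa [h] using sq_sum_le_card_mul_sum_sq (s := s) (f := f)
  have hpos : (0 : ℝ) < #s :=
    Nat.cast_pos.2 (card_pos.2 (nonempty_of_sum_ne_zero (h ▸ one_ne_zero)))
  rwa [inv_le_iff_one_le_mul₀' hpos]

def edgeEnergy {V : Type*} (x : V → ℝ) : Sym2 V → ℝ :=
  Sym2.lift ⟨fun a b => (x a - x b) ^ 2, fun a b => by ring⟩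

theorem edgeEnergy_nonneg {V : Type*} (x : V → ℝ) (e : Sym2 V) : 0 ≤ edgeEnergy x e :=
  e.ind fun a b => sq_nonneg (x a - x b)

namespace SimpleGraph

section Darts

variable {V : Type*} [Fintype V] (G : SimpleGraph V) [DecidableRel G.Adj]

theorem sum_darts_eq_sum_sum_adj {M : Type*} [AddCommMonoid M] (g : V → V → M) :
    ∑ d : G.Dart, g d.fst d.snd = ∑ a, ∑ b, if G.Adj a b then g a b else 0 := by
  have hdarts : (univ.filter fun p : V × V => G.Adj p.1 p.2) =
      (univ : Finset G.Dart).map ⟨Dart.toProd, Dart.toProd_injective⟩ := by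
    ext ⟨a, b⟩
    simp only [mem_map, mem_univ, true_and, Function.Embedding.coeFn_mk, mem_filter]
    exact ⟨fun h => ⟨⟨(a, b), h⟩, rfl⟩, by rintro ⟨⟨_, h⟩, rfl⟩; exact h⟩
  rw [← Fintype.sum_prod_type', ← sum_filter, hdarts, sum_map]
  rfl

theorem sum_darts_edge_eq_two_nsmul_sum_edgeFinset {M : Type*} [AddCommMonoid M]
    (f : Sym2 V → M) : ∑ d : G.Dart, f d.edge = 2 • ∑ e ∈ G.edgeFinset, f e := by
  classical
  rw [← sum_fiberwise_of_maps_to (g := Dart.edge) (t := G.edgeFinset)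
    fun d _ => mem_edgeFinset.2 d.edge_mem, smul_sum]
  refine sum_congr rfl fun e he => ?_
  rw [sum_congr rfl fun d hd => congrArg f (mem_filter.1 hd).2, sum_const,
    G.dart_edge_fiber_card e (mem_edgeFinset.1 he)]

end Darts

variable {V : Type*} [Fintype V] [DecidableEq V] (G : SimpleGraph V) [DecidableRel G.Adj]

theorem dotProduct_lapMatrix_mulVec_eq_sum_edgeEnergy (x : V → ℝ) :
    x ⬝ᵥ (G.lapMatrix ℝ *ᵥ x) = ∑ e ∈ G.edgeFinset, edgeEnergy x e := by
  rw [← Matrix.toLinearMap₂'_apply', lapMatrix_toLinearMap₂', div_eq_iff two_ne_zero, mul_comm,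
    ← G.sum_darts_eq_sum_sum_adj fun a b => (x a - x b) ^ 2, two_mul, ← two_nsmul]
  exact G.sum_darts_edge_eq_two_nsmul_sum_edgeFinset (edgeEnergy x)

theorem dotProduct_single_sub_single_eq_zero_of_lapMatrix_mulVec_eq_zero {s t : V}
    (hst : G.Reachable s t) {z : V → ℝ} (hz : G.lapMatrix ℝ *ᵥ z = 0) :
    z ⬝ᵥ (Pi.single s 1 - Pi.single t 1) = 0 := by
  rw [lapMatrix_mulVec_eq_zero_iff_forall_reachable] at hz
  simp [dotProduct_sub, hz s t hst]

theorem lapMatrix_mulVec_apply_eq_sum_adj (x : V → ℝ) (a : V) :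
    (G.lapMatrix ℝ *ᵥ x) a = ∑ b, if G.Adj a b then x a - x b else 0 := by
  rw [lapMatrix_mulVec_apply, ← sum_filter, ← neighborFinset_eq_filter, sum_sub_distrib,
    sum_const, card_neighborFinset_eq_degree, nsmul_eq_mul]

def orientedBoundary (S : Finset V) : Finset (V × V) :=
  (S ×ˢ Sᶜ).filter fun p => G.Adj p.1 p.2

theorem mem_orientedBoundary {S : Finset V} {p : V × V} :
    p ∈ G.orientedBoundary S ↔ G.Adj p.1 p.2 ∧ p.1 ∈ S ∧ p.2 ∉ S := by
  simp [orientedBoundary, and_comm, and_assoc]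

theorem image_orientedBoundary (S : Finset V) :
    (G.orientedBoundary S).image (fun p => s(p.1, p.2)) = edgeBoundary G S := by
  ext e
  simp only [mem_image, edgeBoundary, mem_filter, mem_edgeFinset, mem_orientedBoundary]
  constructor
  · rintro ⟨⟨a, b⟩, ⟨hab, ha, hb⟩, rfl⟩
    exact ⟨hab, a, b, rfl, ha, hb⟩
  · rintro ⟨he, a, b, rfl, ha, hb⟩
    exact ⟨(a, b), ⟨he, ha, hb⟩, rfl⟩

theorem injOn_orientedBoundary (S : Finset V) :
    Set.InjOn (fun p : V × V => s(p.1, p.2)) (G.orientedBoundary S : Set (V × V)) := by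
  rintro ⟨a, b⟩ hab ⟨c, d⟩ hcd h
  simp only [mem_coe, mem_orientedBoundary] at hab hcd
  rcases Sym2.eq_iff.1 h with ⟨rfl, rfl⟩ | ⟨rfl, rfl⟩
  · rfl
  · exact absurd hcd.2.1 hab.2.2

theorem sum_edgeBoundary_eq_sum_orientedBoundary {M : Type*} [AddCommMonoid M] (S : Finset V)
    (f : Sym2 V → M) :
    ∑ e ∈ edgeBoundary G S, f e = ∑ p ∈ G.orientedBoundary S, f s(p.1, p.2) := by
  rw [← image_orientedBoundary, sum_image (G.injOn_orientedBoundary S)]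

theorem card_orientedBoundary (S : Finset V) :
    #(G.orientedBoundary S) = #(edgeBoundary G S) := by
  rw [← image_orientedBoundary, card_image_of_injOn (G.injOn_orientedBoundary S)]

theorem sum_orientedBoundary_sub (S : Finset V) (x : V → ℝ) :
    ∑ p ∈ G.orientedBoundary S, (x p.1 - x p.2) = ∑ a ∈ S, (G.lapMatrix ℝ *ᵥ x) a := by
  set f : V → V → ℝ := fun a b => if G.Adj a b then x a - x b else 0
  -- an edge inside `S` contributes to the flow in both directions, with opposite signs
  have hanti : ∑ a ∈ S, ∑ b ∈ S, f a b = 0 := by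
    have hswap : ∑ a ∈ S, ∑ b ∈ S, f a b = ∑ a ∈ S, ∑ b ∈ S, -f a b := by
      rw [sum_comm]
      refine sum_congr rfl fun a _ => sum_congr rfl fun b _ => ?_
      simp only [f, G.adj_comm b a]
      split_ifs <;> ring
    simp only [sum_neg_distrib] at hswap
    linarith
  simp only [lapMatrix_mulVec_apply_eq_sum_adj, ← sum_add_sum_compl S, sum_add_distrib]
  rw [show ∑ a ∈ S, ∑ b ∈ S, _ = _ from hanti, zero_add, orientedBoundary, sum_filter, sum_product]

theorem inv_card_edgeBoundary_le_sum_edgeEnergy {S : Finset V} {x : V → ℝ}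
    (hflow : ∑ a ∈ S, (G.lapMatrix ℝ *ᵥ x) a = 1) :
    (#(edgeBoundary G S) : ℝ)⁻¹ ≤ ∑ e ∈ edgeBoundary G S, edgeEnergy x e := by
  rw [← card_orientedBoundary, sum_edgeBoundary_eq_sum_orientedBoundary]
  exact inv_card_le_sum_sq_of_sum_eq_one _ _ (by rw [sum_orientedBoundary_sub, hflow])

theorem sum_inv_card_edgeBoundary_le_dotProduct_lapMatrix_mulVec {ι : Type*} [Fintype ι]
    {S : ι → Finset V}
    (hdisj : Pairwise fun i j => Disjoint (edgeBoundary G (S i)) (edgeBoundary G (S j)))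
    {x : V → ℝ} (hflow : ∀ i, ∑ a ∈ S i, (G.lapMatrix ℝ *ᵥ x) a = 1) :
    ∑ i, (#(edgeBoundary G (S i)) : ℝ)⁻¹ ≤ x ⬝ᵥ (G.lapMatrix ℝ *ᵥ x) := by
  classical
  calc ∑ i, (#(edgeBoundary G (S i)) : ℝ)⁻¹
      ≤ ∑ i, ∑ e ∈ edgeBoundary G (S i), edgeEnergy x e :=
        sum_le_sum fun i _ => G.inv_card_edgeBoundary_le_sum_edgeEnergy (hflow i)
    _ = ∑ e ∈ univ.biUnion fun i => edgeBoundary G (S i), edgeEnergy x e :=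
        (sum_biUnion fun i _ j _ hij => hdisj hij).symm
    _ ≤ ∑ e ∈ G.edgeFinset, edgeEnergy x e :=
        sum_le_sum_of_subset_of_nonneg (biUnion_subset.2 fun _ _ => filter_subset _ _)
          fun e _ _ => edgeEnergy_nonneg x e
    _ = x ⬝ᵥ (G.lapMatrix ℝ *ᵥ x) := (G.dotProduct_lapMatrix_mulVec_eq_sum_edgeEnergy x).symm

end SimpleGraph

/-- Nash-Williams inequality: if `S 1, …, S k` all contain `s` but not `t` and have
pairwise disjoint edge boundaries, then `res(s,t) ≥ Σ_i 1 / |E(S_i, V \ S_i)|`. -/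
theorem nash_williams {V : Type*} [Fintype V] [DecidableEq V]
    (G : SimpleGraph V) [DecidableRel G.Adj] (hconn : G.Connected)
    (Lp : Matrix V V ℝ) (hLp : IsMoorePenrose (G.lapMatrix ℝ) Lp)
    (s t : V) {k : ℕ} (S : Fin k → Finset V)
    (hs : ∀ i, s ∈ S i) (ht : ∀ i, t ∉ S i)
    (hdisj : ∀ i j, i ≠ j → Disjoint (edgeBoundary G (S i)) (edgeBoundary G (S j))) :
    ∑ i, ((edgeBoundary G (S i)).card : ℝ)⁻¹ ≤ effRes Lp s t := by
  set δ : V → ℝ := Pi.single s 1 - Pi.single t 1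
  have hpotential : G.lapMatrix ℝ *ᵥ (Lp *ᵥ δ) = δ :=
    Matrix.mulVec_mulVec_eq_self_of_isSymm (G.isSymm_lapMatrix (R := ℝ)) hLp.1 fun _ hz =>
      G.dotProduct_single_sub_single_eq_zero_of_lapMatrix_mulVec_eq_zero (hconn s t) hz
  have hflow : ∀ i, ∑ a ∈ S i, (G.lapMatrix ℝ *ᵥ (Lp *ᵥ δ)) a = 1 := fun i => by
    simp [hpotential, δ, sum_sub_distrib, hs i, ht i]
  calc ∑ i, (#(edgeBoundary G (S i)) : ℝ)⁻¹
      ≤ (Lp *ᵥ δ) ⬝ᵥ (G.lapMatrix ℝ *ᵥ (Lp *ᵥ δ)) :=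
        G.sum_inv_card_edgeBoundary_le_dotProduct_lapMatrix_mulVec (fun i j => hdisj i j) hflow
    _ = effRes Lp s t := by rw [hpotential, effRes, dotProduct_comm]
end

section
/- For a connected weighted graph G and a vertex subset U, the effective resistance between any two vertices u, v ∈ U in G equals the effective resistance between u and v in the Schur complement graph G_U. -/
open Matrix

open scoped Classical

/-- The Schur complement of a matrix `L` on the index set `U`:
`L(U,U) - L(U,Ū) L(Ū,Ū)⁻¹ L(Ū,U)`. -/
noncomputable def schurCompl {V : Type*} [Fintype V] [DecidableEq V]
    (L : Matrix V V ℝ) (U : Set V) : Matrix U U ℝ :=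
  L.submatrix (Subtype.val : U → V) (Subtype.val : U → V) -
    L.submatrix (Subtype.val : U → V) (Subtype.val : (↥Uᶜ) → V) *
      (L.submatrix (Subtype.val : (↥Uᶜ) → V) (Subtype.val : (↥Uᶜ) → V))⁻¹ *
      L.submatrix (Subtype.val : (↥Uᶜ) → V) (Subtype.val : U → V)

/-! Put `x = 1_u - 1_v`. Since `x` sums to zero and `G` is connected, `x` lies in the range of `L`,
so `x = L z` with `z = L⁺ x`, and then `R_G(u, v) = xᵀ L⁺ x = zᵀ x` because `L L⁺ L = L`. As `x`
vanishes off `U`, eliminating `z|_Ū` from the block equations of `L z = x` gives `L_U z|_U = x|_U`;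
this needs `L(Ū,Ū)` invertible, which holds because a vector in its kernel, extended by zero,
is harmonic on `G` and hence constant, hence zero. The same computation in `G_U` gives
`R_{G_U}(u, v) = z|_Uᵀ x|_U = zᵀ x`. -/

section MatrixFacts

variable {V R : Type*} [Fintype V]

lemma dotProduct_eq_add_compl [AddCommMonoid R] [Mul R] (U : Set V) (a b : V → R) :
    a ⬝ᵥ b = (fun i : U => a i) ⬝ᵥ (fun i : U => b i) +
      (fun i : ↥Uᶜ => a i) ⬝ᵥ (fun i : ↥Uᶜ => b i) :=
  (Fintype.sum_subtype_add_sum_subtype (· ∈ U) fun i => a i * b i).symm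

lemma submatrix_mulVec_add_compl [NonUnitalNonAssocSemiring R] {ι : Type*} (M : Matrix V V R)
    (r : ι → V) (U : Set V) (z : V → R) :
    M.submatrix r (Subtype.val : U → V) *ᵥ (fun i : U => z i) +
      M.submatrix r (Subtype.val : ↥Uᶜ → V) *ᵥ (fun i : ↥Uᶜ => z i) =
      fun k => (M *ᵥ z) (r k) :=
  funext fun k => (dotProduct_eq_add_compl U (M (r k)) z).symm

lemma dotProduct_mulVec_eq_of_mul_mul_eq_self [CommSemiring R] {A B : Matrix V V R}
    (hA : A.IsSymm) (hAB : A * B * A = A) {y z : V → R} (hz : A *ᵥ z = y) :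
    y ⬝ᵥ (B *ᵥ y) = z ⬝ᵥ y := by
  subst hz
  calc (A *ᵥ z) ⬝ᵥ (B *ᵥ (A *ᵥ z)) = z ⬝ᵥ (Aᵀ *ᵥ (B *ᵥ (A *ᵥ z))) := by
        rw [dotProduct_mulVec z, vecMul_transpose]
    _ = z ⬝ᵥ (A *ᵥ z) := by rw [hA.eq, mulVec_mulVec, mulVec_mulVec, hAB]

lemma IsMoorePenrose.mul_mul_eq_self [DecidableEq V] {A B : Matrix V V ℝ} (hA : A.IsSymm)
    (h : IsMoorePenrose A B) : A * A * B = A :=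
  calc A * A * B = A * (A * B)ᵀ := by rw [h.2.2.1, Matrix.mul_assoc]
    _ = (A * B * Aᵀ)ᵀ := by simp only [transpose_mul, transpose_transpose]
    _ = A := by rw [hA.eq, h.1, hA.eq]

end MatrixFacts

section SchurComplement

variable {V : Type*} [Fintype V] [DecidableEq V]

lemma Matrix.IsSymm.schurCompl {L : Matrix V V ℝ} (hL : L.IsSymm) (U : Set V) :
    (schurCompl L U).IsSymm := by
  have hBC : (L.submatrix (Subtype.val : U → V) (Subtype.val : ↥Uᶜ → V))ᵀ =
      L.submatrix Subtype.val Subtype.val := by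
    rw [transpose_submatrix, hL.eq]
  refine (hL.submatrix _).sub ?_
  rw [IsSymm, transpose_mul, transpose_mul, hBC, ← hBC, transpose_transpose,
    (hL.submatrix (Subtype.val : ↥Uᶜ → V)).inv.eq, Matrix.mul_assoc]

lemma schurCompl_mulVec_of_mulVec_eq (L : Matrix V V ℝ) (U : Set V)
    (hD : IsUnit (L.submatrix (Subtype.val : ↥Uᶜ → V) Subtype.val).det) {x z : V → ℝ}
    (hz : L *ᵥ z = x) (hx : ∀ i ∉ U, x i = 0) :
    schurCompl L U *ᵥ (fun i : U => z i) = fun i : U => x i := by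
  have hrowU := submatrix_mulVec_add_compl L (Subtype.val : U → V) U z
  have hrowW := submatrix_mulVec_add_compl L (Subtype.val : ↥Uᶜ → V) U z
  rw [hz] at hrowU hrowW
  have hzW : (L.submatrix (Subtype.val : ↥Uᶜ → V) (Subtype.val : ↥Uᶜ → V))⁻¹ *ᵥ
      (L.submatrix (Subtype.val : ↥Uᶜ → V) (Subtype.val : U → V) *ᵥ fun i : U => z i) =
      -fun i : ↥Uᶜ => z i := by
    rw [eq_neg_of_add_eq_zero_left (hrowW.trans (funext fun i => hx i i.2)), mulVec_neg,
      mulVec_mulVec, nonsing_inv_mul _ hD, one_mulVec]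
  rw [schurCompl, sub_mulVec, ← mulVec_mulVec, ← mulVec_mulVec, hzW, mulVec_neg,
    sub_neg_eq_add, hrowU]

end SchurComplement

section Laplacian

variable {V : Type*} [Fintype V] [DecidableEq V] {w : V → V → ℝ}

lemma wLap_mulVec_apply (w : V → V → ℝ) (f : V → ℝ) (i : V) :
    (wLap w *ᵥ f) i = ∑ j, w i j * (f i - f j) := by
  simp only [wLap, mulVec, dotProduct, Matrix.sub_apply, diagonal, of_apply, sub_mul,
    Finset.sum_sub_distrib, mul_sub, ite_mul, zero_mul,
    Finset.sum_ite_eq, Finset.mem_univ, if_true]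
  rw [Finset.sum_mul]

lemma wLap_mulVec_one (w : V → V → ℝ) : wLap w *ᵥ 1 = 0 :=
  funext fun i => by simp [wLap_mulVec_apply]

namespace IsWeight

lemma isSymm_wLap (hw : IsWeight w) : (wLap w).IsSymm := by
  ext i j
  simp only [wLap, transpose_apply, Matrix.sub_apply, diagonal, of_apply]
  rcases eq_or_ne i j with rfl | h
  · rfl
  · simp [h, Ne.symm h, hw.symm i j]

lemma sum_wLap_mulVec (hw : IsWeight w) (f : V → ℝ) : ∑ i, (wLap w *ᵥ f) i = 0 := by
  rw [← one_dotProduct, dotProduct_mulVec, ← mulVec_transpose, hw.isSymm_wLap.eq,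
    wLap_mulVec_one, zero_dotProduct]

lemma two_mul_dotProduct_wLap_mulVec (hw : IsWeight w) (f : V → ℝ) :
    2 * (f ⬝ᵥ (wLap w *ᵥ f)) = ∑ i, ∑ j, w i j * (f i - f j) ^ 2 := by
  have hT : f ⬝ᵥ (wLap w *ᵥ f) = ∑ i, ∑ j, w i j * (f i * (f i - f j)) := by
    simp only [dotProduct, wLap_mulVec_apply, Finset.mul_sum]
    exact Finset.sum_congr rfl fun i _ => Finset.sum_congr rfl fun j _ => by ring
  have hswap : ∑ i, ∑ j, w i j * (f j * (f j - f i)) =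
      ∑ i, ∑ j, w i j * (f i * (f i - f j)) := by
    rw [Finset.sum_comm]
    exact Finset.sum_congr rfl fun i _ => Finset.sum_congr rfl fun j _ => by rw [hw.symm j i]
  rw [two_mul, hT]
  nth_rewrite 2 [← hswap]
  simp only [← Finset.sum_add_distrib]
  exact Finset.sum_congr rfl fun i _ => Finset.sum_congr rfl fun j _ => by ring

lemma apply_eq_of_dotProduct_wLap_mulVec_eq_zero (hw : IsWeight w)
    (hconn : (supportGraph w).Connected) {f : V → ℝ} (h : f ⬝ᵥ (wLap w *ᵥ f) = 0) (i j : V) :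
    f i = f j := by
  have hterms : ∑ i, ∑ j, w i j * (f i - f j) ^ 2 = 0 := by
    rw [← hw.two_mul_dotProduct_wLap_mulVec, h, mul_zero]
  have hnonneg : ∀ i j, 0 ≤ w i j * (f i - f j) ^ 2 :=
    fun i j => mul_nonneg (hw.nonneg i j) (sq_nonneg _)
  have hzero : ∀ i j, w i j * (f i - f j) ^ 2 = 0 := by
    rw [Finset.sum_eq_zero_iff_of_nonneg fun i _ => Finset.sum_nonneg fun j _ => hnonneg i j]
      at hterms
    exact fun i j => (Finset.sum_eq_zero_iff_of_nonneg fun j _ => hnonneg i j).1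
      (hterms i (Finset.mem_univ _)) j (Finset.mem_univ _)
  have hadj : ∀ i j, (supportGraph w).Adj i j → f i = f j := by
    intro i j hij
    have hwij : w i j ≠ 0 := by
      obtain ⟨-, hij | hji⟩ := hij
      exacts [hij, hw.symm i j ▸ hji]
    exact sub_eq_zero.1 <| pow_eq_zero_iff two_ne_zero |>.1 <|
      (mul_eq_zero.1 (hzero i j)).resolve_left hwij
  obtain ⟨p⟩ := hconn i j
  induction p with
  | nil => rfl
  | cons ha _ ih => exact (hadj _ _ ha).trans ih

lemma eq_zero_of_wLap_mulVec_eq_zero (hw : IsWeight w) (hconn : (supportGraph w).Connected)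
    {f : V → ℝ} (hf : wLap w *ᵥ f = 0) (hsum : ∑ i, f i = 0) : f = 0 := by
  funext i
  have hconst := hw.apply_eq_of_dotProduct_wLap_mulVec_eq_zero hconn (f := f)
    (by rw [hf, dotProduct_zero])
  have : Nonempty V := ⟨i⟩
  have hcard : (Fintype.card V : ℝ) * f i = 0 := by
    rw [← hsum, ← nsmul_eq_mul, ← Finset.card_univ, ← Finset.sum_const]
    exact Finset.sum_congr rfl fun j _ => (hconst j i).symm
  exact (mul_eq_zero.1 hcard).resolve_left (Nat.cast_ne_zero.2 Fintype.card_ne_zero)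

lemma wLap_mulVec_mulVec_of_sum_eq_zero (hw : IsWeight w) (hconn : (supportGraph w).Connected)
    {Lp : Matrix V V ℝ} (hLp : IsMoorePenrose (wLap w) Lp) {x : V → ℝ} (hx : ∑ i, x i = 0) :
    wLap w *ᵥ (Lp *ᵥ x) = x := by
  have hker : wLap w *ᵥ (x - wLap w *ᵥ (Lp *ᵥ x)) = 0 := by
    rw [mulVec_sub, mulVec_mulVec, mulVec_mulVec, hLp.mul_mul_eq_self hw.isSymm_wLap, sub_self]
  have hsum : ∑ i, (x - wLap w *ᵥ (Lp *ᵥ x)) i = 0 := by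
    simp only [Pi.sub_apply, Finset.sum_sub_distrib, hx, hw.sum_wLap_mulVec, sub_zero]
  exact (sub_eq_zero.1 (hw.eq_zero_of_wLap_mulVec_eq_zero hconn hker hsum)).symm

lemma isUnit_det_wLap_submatrix_compl (hw : IsWeight w) (hconn : (supportGraph w).Connected)
    {U : Set V} (hU : U.Nonempty) :
    IsUnit ((wLap w).submatrix (Subtype.val : ↥Uᶜ → V) Subtype.val).det := by
  rw [isUnit_iff_ne_zero, Ne, ← exists_mulVec_eq_zero_iff]
  rintro ⟨g, hg, hDg⟩
  let f : V → ℝ := fun i => if h : i ∈ U then 0 else g ⟨i, h⟩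
  have hfU : (fun i : U => f i) = 0 := funext fun i => dif_pos i.2
  have hfW : (fun i : ↥Uᶜ => f i) = g := funext fun i => dif_neg i.2
  have hLf : (fun i : ↥Uᶜ => (wLap w *ᵥ f) i) = 0 := by
    rw [← submatrix_mulVec_add_compl, hfU, hfW, mulVec_zero, hDg, zero_add]
  have hquad : f ⬝ᵥ (wLap w *ᵥ f) = 0 := by
    rw [dotProduct_eq_add_compl U, hfU, hLf, zero_dotProduct, dotProduct_zero, add_zero]
  obtain ⟨u, hu⟩ := hU
  refine hg (hfW ▸ funext fun i => ?_)
  rw [hw.apply_eq_of_dotProduct_wLap_mulVec_eq_zero hconn hquad i u]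
  exact dif_pos hu

end IsWeight

end Laplacian

/-- Effective resistances between vertices of `U` are preserved by taking the Schur
complement of the Laplacian on `U`. -/
theorem effRes_schurCompl {V : Type*} [Fintype V] [DecidableEq V]
    (w : V → V → ℝ) (hw : IsWeight w) (hconn : (supportGraph w).Connected)
    (U : Set V)
    (Lp : Matrix V V ℝ) (hLp : IsMoorePenrose (wLap w) Lp)
    (Mp : Matrix U U ℝ) (hMp : IsMoorePenrose (schurCompl (wLap w) U) Mp)
    (u v : U) :
    effRes Mp u v = effRes Lp (u : V) (v : V) := by
  set x : V → ℝ := Pi.single (u : V) 1 - Pi.single (v : V) 1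
  have hx : ∑ i, x i = 0 := by simp [x, Finset.sum_sub_distrib]
  have hxW : ∀ i ∉ U, x i = 0 := fun i hi => by
    simp [x, show i ≠ u from fun h => hi (h ▸ u.2),
      show i ≠ v from fun h => hi (h ▸ v.2)]
  have hxU : (fun i : U => x i) = Pi.single u 1 - Pi.single v 1 := by
    funext i
    simp [x, Pi.single_apply, Subtype.ext_iff]
  have hLz := hw.wLap_mulVec_mulVec_of_sum_eq_zero hconn hLp hx
  have hSz := schurCompl_mulVec_of_mulVec_eq (wLap w) U
    (hw.isUnit_det_wLap_submatrix_compl hconn ⟨u, u.2⟩) hLz hxW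
  calc effRes Mp u v = (fun i : U => (Lp *ᵥ x) i) ⬝ᵥ (fun i : U => x i) := by
        rw [effRes, ← hxU]
        exact dotProduct_mulVec_eq_of_mul_mul_eq_self (hw.isSymm_wLap.schurCompl U) hMp.1 hSz
    _ = (Lp *ᵥ x) ⬝ᵥ x := by
        rw [dotProduct_eq_add_compl U (Lp *ᵥ x), show (fun i : ↥Uᶜ => x i) = 0 from funext fun i => hxW i i.2,
          dotProduct_zero, add_zero]
    _ = effRes Lp u v :=
        (dotProduct_mulVec_eq_of_mul_mul_eq_self hw.isSymm_wLap hLp.1 hLz).symm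
end

section
/- In a connected unweighted graph, the effective resistance between any pair of vertices lying in two different edge-biconnected components is at least one. -/
open Matrix

/-!
Put `d = 1_u - 1_v` and `x = L⁺ d`. Since `d` is orthogonal to the kernel of the Laplacian `L`
(the constants, `G` being connected), `L x = d`, so the effective resistance is `xᵀ d = xᵀ L x`.
For every `f`, expanding `0 ≤ (f - x)ᵀ L (f - x)` gives `xᵀ L x ≥ 2 fᵀ d - fᵀ L f`. Take for `f`
the indicator of the vertices that `u` still reaches once the cut edge `ab` is deleted: then
`fᵀ d = 1`, and `f` is constant across every other edge, so `fᵀ L f = (f a - f b)² ≤ 1`.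
-/

namespace IsMoorePenrose

variable {V : Type*} [Fintype V] [DecidableEq V] {A B : Matrix V V ℝ}

theorem mul_mul_self_eq (hA : A.IsSymm) (h : IsMoorePenrose A B) : A * (A * B) = A := by
  rw [← transpose_transpose (A * (A * B)), transpose_mul, h.2.2.1, hA.eq, h.1, hA.eq]

-- `d - A (B d)` lies in `ker A`, and is orthogonal to `ker A` as `d` and `range A` are.
theorem mulVec_mulVec_eq_of_forall_dotProduct_eq_zero (hA : A.IsSymm) (h : IsMoorePenrose A B)
    {d : V → ℝ} (hd : ∀ w, A *ᵥ w = 0 → w ⬝ᵥ d = 0) : A *ᵥ (B *ᵥ d) = d := by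
  set w := d - A *ᵥ (B *ᵥ d)
  have hAw : A *ᵥ w = 0 := by
    rw [mulVec_sub, mulVec_mulVec, mulVec_mulVec, mul_assoc, h.mul_mul_self_eq hA, sub_self]
  have hw : w ⬝ᵥ w = 0 := by
    rw [dotProduct_sub w d, hd w hAw, dotProduct_mulVec, ← mulVec_transpose, hA.eq, hAw,
      zero_dotProduct, sub_zero]
  exact (sub_eq_zero.mp (dotProduct_self_eq_zero.mp hw)).symm

end IsMoorePenrose

theorem Matrix.PosSemidef.two_mul_dotProduct_sub_le {V : Type*} [Fintype V] {A : Matrix V V ℝ}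
    (hA : A.PosSemidef) (f x : V → ℝ) :
    2 * (f ⬝ᵥ (A *ᵥ x)) - f ⬝ᵥ (A *ᵥ f) ≤ x ⬝ᵥ (A *ᵥ x) := by
  have hsymm : x ⬝ᵥ (A *ᵥ f) = f ⬝ᵥ (A *ᵥ x) := by
    rw [dotProduct_mulVec, ← mulVec_transpose, ← conjTranspose_eq_transpose_of_trivial, hA.1.eq,
      dotProduct_comm]
  have hnonneg := hA.dotProduct_mulVec_nonneg (f - x)
  rw [star_trivial, mulVec_sub, dotProduct_sub, sub_dotProduct, sub_dotProduct, hsymm] at hnonneg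
  linarith

namespace SimpleGraph

section ReachableIndicator

variable {V : Type*} (H : SimpleGraph V) (u : V)

noncomputable def reachableIndicator : V → ℝ :=
  Set.indicator {y | H.Reachable u y} 1

variable {H u}

theorem reachableIndicator_of_reachable {v : V} (h : H.Reachable u v) :
    H.reachableIndicator u v = 1 :=
  Set.indicator_of_mem h 1

theorem reachableIndicator_of_not_reachable {v : V} (h : ¬ H.Reachable u v) :
    H.reachableIndicator u v = 0 :=
  Set.indicator_of_notMem h 1

theorem reachableIndicator_eq_of_adj {i j : V} (h : H.Adj i j) :
    H.reachableIndicator u i = H.reachableIndicator u j := by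
  by_cases hi : H.Reachable u i
  · rw [reachableIndicator_of_reachable hi, reachableIndicator_of_reachable (hi.trans h.reachable)]
  · have hj : ¬ H.Reachable u j := fun hj => hi (hj.trans h.symm.reachable)
    rw [reachableIndicator_of_not_reachable hi, reachableIndicator_of_not_reachable hj]

variable (H u)

theorem reachableIndicator_sub_sq_le_one (i j : V) :
    (H.reachableIndicator u i - H.reachableIndicator u j) ^ 2 ≤ 1 := by
  by_cases hi : H.Reachable u i <;> by_cases hj : H.Reachable u j <;>
    simp [reachableIndicator_of_reachable, reachableIndicator_of_not_reachable, hi, hj]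

end ReachableIndicator

section Laplacian

variable {V : Type*} [Fintype V] [DecidableEq V] (G : SimpleGraph V) [DecidableRel G.Adj]

theorem dotProduct_single_sub_single_eq_zero_of_lapMatrix_mulVec_eq_zero_s13 (hconn : G.Connected)
    {w : V → ℝ} (hw : G.lapMatrix ℝ *ᵥ w = 0) (u v : V) :
    w ⬝ᵥ (Pi.single u 1 - Pi.single v 1) = 0 := by
  rw [dotProduct_sub, dotProduct_single, dotProduct_single,
    G.lapMatrix_mulVec_eq_zero_iff_forall_reachable.mp hw u v (hconn u v), sub_self]

theorem dotProduct_lapMatrix_mulVec_eq_sq_of_forall_deleteEdges_adj {a b : V} (hab : G.Adj a b)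
    {f : V → ℝ} (hf : ∀ i j, (G.deleteEdges {s(a, b)}).Adj i j → f i = f j) :
    f ⬝ᵥ (G.lapMatrix ℝ *ᵥ f) = (f a - f b) ^ 2 := by
  have hterm : ∀ i j, (if G.Adj i j then (f i - f j) ^ 2 else 0) =
      (if i = a ∧ j = b then (f a - f b) ^ 2 else 0) +
        (if i = b ∧ j = a then (f a - f b) ^ 2 else 0) := by
    intro i j
    by_cases hi : i = a ∧ j = b
    · obtain ⟨rfl, rfl⟩ := hi
      simp only [hab, ↓reduceIte, and_self, hab.ne.symm, and_false, add_zero]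
    by_cases hi' : i = b ∧ j = a
    · obtain ⟨rfl, rfl⟩ := hi'
      simp only [hab.symm, ↓reduceIte, hab.ne, and_false, and_self, zero_add]
      ring
    · rw [if_neg hi, if_neg hi', add_zero, ite_eq_right_iff]
      intro hij
      rw [hf i j (deleteEdges_adj.mpr ⟨hij, by simp [hi, hi']⟩), sub_self, sq, zero_mul]
  have hquad := lapMatrix_toLinearMap₂' ℝ G f
  rw [toLinearMap₂'_apply'] at hquad
  simp only [hquad, hterm, Finset.sum_add_distrib, ite_and, Finset.sum_ite_irrel,
    Finset.sum_const_zero, Finset.sum_ite_eq', Finset.mem_univ, if_true]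
  ring

end Laplacian

end SimpleGraph

/-- In a connected unweighted graph, the effective resistance between two vertices lying in
different edge-biconnected components (i.e. separated by some cut edge) is at least one. -/
theorem one_le_effRes_of_separated_by_cutEdge {V : Type*} [Fintype V] [DecidableEq V]
    (G : SimpleGraph V) [DecidableRel G.Adj] (hconn : G.Connected)
    (Lp : Matrix V V ℝ) (hLp : IsMoorePenrose (G.lapMatrix ℝ) Lp)
    {u v : V}
    (hsep : ∃ a b, G.Adj a b ∧ ¬ (G.deleteEdges {s(a, b)}).Reachable u v) :
    1 ≤ effRes Lp u v := by
  obtain ⟨a, b, hab, hnr⟩ := hsep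
  set L := G.lapMatrix ℝ
  set d : V → ℝ := Pi.single u 1 - Pi.single v 1
  set x := Lp *ᵥ d
  let f := (G.deleteEdges {s(a, b)}).reachableIndicator u
  have hLx : L *ᵥ x = d :=
    hLp.mulVec_mulVec_eq_of_forall_dotProduct_eq_zero (G.isSymm_lapMatrix (R := ℝ))
      fun w hw => G.dotProduct_single_sub_single_eq_zero_of_lapMatrix_mulVec_eq_zero_s13 hconn hw u v
  have hfd : f ⬝ᵥ d = 1 := by
    have hfu : f u = 1 := SimpleGraph.reachableIndicator_of_reachable (.refl u)
    have hfv : f v = 0 := SimpleGraph.reachableIndicator_of_not_reachable hnr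
    rw [dotProduct_sub, dotProduct_single, dotProduct_single, hfu, hfv]
    norm_num
  have henergy : f ⬝ᵥ (L *ᵥ f) ≤ 1 := by
    rw [G.dotProduct_lapMatrix_mulVec_eq_sq_of_forall_deleteEdges_adj hab
      fun _ _ => SimpleGraph.reachableIndicator_eq_of_adj]
    exact SimpleGraph.reachableIndicator_sub_sq_le_one _ u a b
  have hbound := (G.posSemidef_lapMatrix ℝ).two_mul_dotProduct_sub_le f x
  rw [hLx, hfd] at hbound
  calc 1 ≤ x ⬝ᵥ d := by linarith
    _ = effRes Lp u v := dotProduct_comm x d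
end
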